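/- The fixed point of expansion is contained in the true reachable-safe upper bound: if f(s,a) ∈ f_u(s,a) for all s,a, and every state of S₀ can reach S₀ (via the empty action sequence), then ⋃_k E^(k)(S₀) ⊆ { s | ∃ action list L, f(s,L) ∈ S₀ }. -/
import Mathlib


def run {S A : Type*} (f : S → A → S) : S → List A → S
  | s, [] => s
  | s, a :: L => run f (f s a) L

def expand {S A : Type*} (fu : S → A → Set S) (Q : Set S) : Set S :=
  Q ∪ {s | ∃ a, fu s a ⊆ Q}

/-- The fixed point of expansion is contained in the true reachable-safe upper bound. -/
theorem stmt_15 {S A : Type*} (f : S → A → S) (fu : S → A → Set S)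
    (hsound : ∀ s a, f s a ∈ fu s a) (S₀ : Set S)
    (hS₀ : ∀ s ∈ S₀, run f s ([] : List A) ∈ S₀) :
    (⋃ k, (expand fu)^[k] S₀) ⊆ {s | ∃ L : List A, run f s L ∈ S₀} := by
  intro s hs
  simp only [Set.mem_iUnion] at hs
  obtain ⟨k, hk⟩ := hs
  induction k generalizing s with
  | zero => exact ⟨[], hk⟩
  | succ n ih =>
    rw [Function.iterate_succ_apply'] at hk
    rcases hk with h | ⟨a, ha⟩
    · exact ih h
    · obtain ⟨L, hL⟩ := ih (ha (hsound s a))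
      exact ⟨a :: L, hL⟩
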